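/- A single-layer ReLU network x ↦ ReLU(W x + b) maps any ImageStar Θ = {c + V α : C α ≤ d} with coordinates whose sign is fixed over Θ (i.e., for each output coordinate j, either (W(c + V α) + b)_j ≥ 0 for all feasible α, or ≤ 0 for all feasible α) to the ImageStar obtained by zeroing the rows of (W c + b) and W V corresponding to the nonpositive coordinates, with the same predicate C α ≤ d. -/
import Mathlib


/-- Componentwise ReLU. -/
def reluV {ι : Type*} (y : ι → ℝ) : ι → ℝ := fun i => max 0 (y i)

/-- If, over an ImageStar `Θ = {c + V α : C α ≤ d}`, every output coordinate of
the affine layer `x ↦ W x + b` has a fixed sign (nonpositive exactly on the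
coordinates in `s`, nonnegative on the others), then the ReLU image of the
affine image of `Θ` is the ImageStar with the same predicate obtained by
zeroing the rows corresponding to the nonpositive coordinates. -/
theorem relu_imageStar_fixed_sign {n m p q : ℕ}
    (c : Fin n → ℝ) (V : Matrix (Fin n) (Fin m) ℝ)
    (C : Matrix (Fin p) (Fin m) ℝ) (d : Fin p → ℝ)
    (W : Matrix (Fin q) (Fin n) ℝ) (b : Fin q → ℝ)
    (s : Fin q → Prop) [DecidablePred s]
    (hpos : ∀ j, ¬ s j → ∀ α : Fin m → ℝ, (∀ i, C.mulVec α i ≤ d i) →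
      0 ≤ (W.mulVec (c + V.mulVec α) + b) j)
    (hneg : ∀ j, s j → ∀ α : Fin m → ℝ, (∀ i, C.mulVec α i ≤ d i) →
      (W.mulVec (c + V.mulVec α) + b) j ≤ 0) :
    reluV '' {y : Fin q → ℝ | ∃ α : Fin m → ℝ, (∀ i, C.mulVec α i ≤ d i) ∧
        y = W.mulVec (c + V.mulVec α) + b}
      = {y : Fin q → ℝ | ∃ α : Fin m → ℝ, (∀ i, C.mulVec α i ≤ d i) ∧
          y = fun j => if s j then 0 else (W.mulVec (c + V.mulVec α) + b) j} := by
  ext y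
  simp only [Set.mem_image, Set.mem_setOf_eq]
  constructor
  · rintro ⟨z, ⟨α, hα, rfl⟩, rfl⟩
    refine ⟨α, hα, ?_⟩
    funext j
    simp only [reluV]
    by_cases hj : s j
    · have := hneg j hj α hα
      simp only [Pi.add_apply] at this
      simp [hj, max_eq_left this]
    · have := hpos j hj α hα
      simp only [Pi.add_apply] at this
      simp [hj, max_eq_right this]
  · rintro ⟨α, hα, rfl⟩
    refine ⟨W.mulVec (c + V.mulVec α) + b, ⟨α, hα, rfl⟩, ?_⟩
    funext j
    simp only [reluV]
    by_cases hj : s j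
    · have := hneg j hj α hα
      simp only [Pi.add_apply] at this
      simp [hj, max_eq_left this]
    · have := hpos j hj α hα
      simp only [Pi.add_apply] at this
      simp [hj, max_eq_right this]
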